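/- For a unit vector v and symmetric operator A with u = A v, setting the Rayleigh quotient ρ = ⟨u, v⟩, one has ‖A v − ρ v‖² = ⟨u, u⟩ − ⟨u, v⟩²; consequently there exists an eigenvalue λ of A with |λ − ρ| ≤ (⟨u,u⟩ − ⟨u,v⟩²)^{1/2}. -/

import Mathlib

/-!
Krylov–Bogolyubov: expanding `v` in an orthonormal eigenbasis of `A` gives
`‖A v - μ v‖² = ∑ (λᵢ - μ)² |cᵢ|²` with `∑ |cᵢ|² = ‖v‖²`, so the residual is at least
`minᵢ |λᵢ - μ| · ‖v‖`. With `μ` the Rayleigh quotient, expanding the square computes the residual.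
-/

open Module RCLike Module.End

theorem norm_sub_inner_smul_sq_of_norm_eq_one {E : Type*} [NormedAddCommGroup E]
    [InnerProductSpace ℝ E] (x : E) {v : E} (hv : ‖v‖ = 1) :
    ‖x - (inner ℝ x v : ℝ) • v‖ ^ 2 = inner ℝ x x - (inner ℝ x v : ℝ) ^ 2 := by
  rw [norm_sub_sq_real, inner_smul_right, norm_smul, hv, real_inner_self_eq_norm_sq,
    Real.norm_eq_abs, mul_one, sq_abs]
  ring

namespace LinearMap.IsSymmetric

variable {𝕜 E : Type*} [RCLike 𝕜] [NormedAddCommGroup E] [InnerProductSpace 𝕜 E]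
  [FiniteDimensional 𝕜 E] {T : E →ₗ[𝕜] E}

theorem norm_sub_smul_sq_eq_sum (hT : T.IsSymmetric) (μ : ℝ) (v : E) :
    ‖T v - (μ : 𝕜) • v‖ ^ 2 = ∑ i, (hT.eigenvalues rfl i - μ) ^ 2 *
      ‖(hT.eigenvectorBasis rfl).repr v i‖ ^ 2 := by
  rw [← (hT.eigenvectorBasis rfl).repr.norm_map, EuclideanSpace.norm_sq_eq]
  refine Finset.sum_congr rfl fun i _ => ?_
  rw [map_sub, map_smul, PiLp.sub_apply, PiLp.smul_apply, eigenvectorBasis_apply_self_apply,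
    smul_eq_mul, ← sub_mul, norm_mul, mul_pow, ← ofReal_sub, norm_ofReal, sq_abs]

theorem exists_hasEigenvalue_abs_sub_mul_norm_le [Nontrivial E] (hT : T.IsSymmetric) (μ : ℝ)
    (v : E) : ∃ lam : ℝ, HasEigenvalue T lam ∧ |lam - μ| * ‖v‖ ≤ ‖T v - (μ : 𝕜) • v‖ := by
  have : Nonempty (Fin (finrank 𝕜 E)) := ⟨⟨0, finrank_pos⟩⟩
  obtain ⟨i, hi⟩ := Finite.exists_min fun i => |hT.eigenvalues rfl i - μ|
  refine ⟨_, hT.hasEigenvalue_eigenvalues rfl i, ?_⟩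
  refine le_of_pow_le_pow_left₀ two_ne_zero (norm_nonneg _) ?_
  calc (|hT.eigenvalues rfl i - μ| * ‖v‖) ^ 2
      = ∑ j, (hT.eigenvalues rfl i - μ) ^ 2 * ‖(hT.eigenvectorBasis rfl).repr v j‖ ^ 2 := by
        rw [mul_pow, sq_abs, ← (hT.eigenvectorBasis rfl).repr.norm_map,
          EuclideanSpace.norm_sq_eq, Finset.mul_sum]
    _ ≤ ∑ j, (hT.eigenvalues rfl j - μ) ^ 2 * ‖(hT.eigenvectorBasis rfl).repr v j‖ ^ 2 := by
        gcongr ∑ j, ?_ * _ with j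
        exact sq_le_sq.mpr (hi j)
    _ = ‖T v - (μ : 𝕜) • v‖ ^ 2 := (hT.norm_sub_smul_sq_eq_sum μ v).symm

end LinearMap.IsSymmetric

/-- For a unit vector `v`, a symmetric operator `A`, `u = A v`, and the
Rayleigh quotient `ρ = ⟨u, v⟩`: `‖Av − ρv‖² = ⟨u,u⟩ − ⟨u,v⟩²`, and there is an
eigenvalue `λ` of `A` with `|λ − ρ| ≤ (⟨u,u⟩ − ⟨u,v⟩²)^{1/2}`. -/
theorem rayleigh_quotient_bound (N : ℕ)
    (A : EuclideanSpace ℝ (Fin N) →ₗ[ℝ] EuclideanSpace ℝ (Fin N))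
    (hA : ∀ u v : EuclideanSpace ℝ (Fin N),
        inner ℝ (A u) v = (inner ℝ u (A v) : ℝ))
    (v : EuclideanSpace ℝ (Fin N)) (hv : ‖v‖ = 1)
    (u : EuclideanSpace ℝ (Fin N)) (hu : u = A v) :
    ‖A v - (inner ℝ u v : ℝ) • v‖ ^ 2 =
      (inner ℝ u u : ℝ) - (inner ℝ u v : ℝ) ^ 2 ∧
    ∃ lam : ℝ, Module.End.HasEigenvalue A lam ∧
      |lam - (inner ℝ u v : ℝ)| ≤
        Real.sqrt ((inner ℝ u u : ℝ) - (inner ℝ u v : ℝ) ^ 2) := by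
  subst hu
  have hres := norm_sub_inner_smul_sq_of_norm_eq_one (A v) hv
  have : Nontrivial (EuclideanSpace ℝ (Fin N)) := nontrivial_of_ne v 0 (by rintro rfl; simp at hv)
  obtain ⟨lam, hlam, hle⟩ :=
    LinearMap.IsSymmetric.exists_hasEigenvalue_abs_sub_mul_norm_le hA (inner ℝ (A v) v) v
  refine ⟨hres, lam, hlam, ?_⟩
  calc |lam - inner ℝ (A v) v| = |lam - inner ℝ (A v) v| * ‖v‖ := by rw [hv, mul_one]
    _ ≤ ‖A v - (inner ℝ (A v) v : ℝ) • v‖ := hle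
    _ = _ := by rw [← hres, Real.sqrt_sq (norm_nonneg _)]
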